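/- arXiv:2509.25571 — 3 statements merged into one kernel-verified Lean document; each statement's English description precedes it below -/
import Mathlib

section
/- Let c₁ ≥ 0 and δ, γ ∈ ℝ with cos γ ≠ 0, and set ζ = tan γ + c₁ δ. Then (1/M(c₁))·(δ² + tan²γ) ≤ δ² + ζ² ≤ M(c₁)·(δ² + tan²γ), where M(s) = 1 + s²/2 + s√(1 + s²/4). -/
open Real

noncomputable def Mgain (s : ℝ) : ℝ := 1 + s ^ 2 / 2 + s * Real.sqrt (1 + s ^ 2 / 4)

theorem stmt7 (c₁ δ γ : ℝ) (hc₁ : 0 ≤ c₁) (hcos : Real.cos γ ≠ 0) :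
    (1 / Mgain c₁) * (δ ^ 2 + Real.tan γ ^ 2) ≤ δ ^ 2 + (Real.tan γ + c₁ * δ) ^ 2 ∧
    δ ^ 2 + (Real.tan γ + c₁ * δ) ^ 2 ≤ Mgain c₁ * (δ ^ 2 + Real.tan γ ^ 2) := by
  set t := Real.tan γ with ht
  set s := Real.sqrt (1 + c₁ ^ 2 / 4) with hsdef
  have hs0 : 0 ≤ s := Real.sqrt_nonneg _
  have hs2 : s ^ 2 = 1 + c₁ ^ 2 / 4 := Real.sq_sqrt (by positivity)
  have hsgt : c₁ / 2 < s := by nlinarith [sq_nonneg (s - c₁ / 2)]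
  have hM : Mgain c₁ = 1 + c₁ ^ 2 / 2 + c₁ * s := rfl
  have hMpos : 0 < Mgain c₁ := by rw [hM]; positivity
  rw [hM] at hMpos ⊢
  have hid1 : (s - c₁ / 2) * ((1 + c₁ ^ 2 / 2 + c₁ * s) * (δ ^ 2 + t ^ 2)
      - (δ ^ 2 + (t + c₁ * δ) ^ 2)) = c₁ * ((s - c₁ / 2) * δ - t) ^ 2 := by
    linear_combination (c₁ * t ^ 2) * hs2
  have hid2 : (s - c₁ / 2) * ((1 + c₁ ^ 2 / 2 + c₁ * s) * (δ ^ 2 + (t + c₁ * δ) ^ 2)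
      - (δ ^ 2 + t ^ 2)) = c₁ * (1 + c₁ ^ 2 / 2 + c₁ * s) * (δ + (s - c₁ / 2) * t) ^ 2 := by
    linear_combination (c₁ * δ ^ 2 + c₁ ^ 3 * δ ^ 2 - c₁ ^ 2 * t ^ 2 * s
      + c₁ ^ 3 * t ^ 2 / 2) * hs2
  have ha : 0 < s - c₁ / 2 := by linarith
  constructor
  · rw [div_mul_eq_mul_div, div_le_iff₀ hMpos]
    nlinarith [hid2, mul_nonneg (mul_nonneg hc₁ hMpos.le)
      (sq_nonneg (δ + (s - c₁ / 2) * t)), ha]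
  · nlinarith [hid1, mul_nonneg hc₁ (sq_nonneg ((s - c₁ / 2) * δ - t)), ha]
end

section
/- Consider the planar ODE system (in the variable ρ, decreasing from ρ₀ > 0) dδ/dρ = −(1/ρ)·tan γ, dγ/dρ = −(1/ρ)·tan γ + ω/(v cos γ), with v > 0. Under the feedback ω = (v/ρ)·{sin γ + cos²γ·[cos γ·(1+c₁c₂)·δ + (c₁+c₂)·sin γ]} and with ζ := tan γ + c₁ δ, the function V = δ² + ζ² satisfies dV/dρ = (2/ρ)·(c₁ δ² + c₂ ζ²) along solutions, wherever cos γ ≠ 0 and ρ > 0. -/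
/-!
With `ζ = tan γ + c₁ δ` the closed loop is linear up to the common factor `1/ρ`: the feedback is
chosen so that `(tan γ)' = ((1 + c₁c₂) δ + (c₁ + c₂) tan γ) / ρ`, hence `δ' = (c₁ δ - ζ) / ρ` and
`ζ' = (δ + c₂ ζ) / ρ`, and the cross terms `∓ δ ζ` cancel in `(δ² + ζ²)' = 2 (δ δ' + ζ ζ')`.
-/

open Set Real

theorem one_div_cos_sq_mul_closedLoop_eq {g d v k c₁ c₂ : ℝ} (hg : cos g ≠ 0)
    (hv : v ≠ 0) :
    1 / cos g ^ 2 * (-k * tan g + v * k * (sin g + cos g ^ 2 *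
        (cos g * (1 + c₁ * c₂) * d + (c₁ + c₂) * sin g)) / (v * cos g)) =
      k * ((1 + c₁ * c₂) * d + (c₁ + c₂) * tan g) := by
  rw [tan_eq_sin_div_cos]
  field_simp
  ring

theorem HasDerivAt.tan_comp_of_closedLoop {γ δ : ℝ → ℝ} {ρ v k c₁ c₂ : ℝ}
    (hc : Real.cos (γ ρ) ≠ 0) (hv : v ≠ 0)
    (hγ : HasDerivAt γ (-k * Real.tan (γ ρ) + v * k * (Real.sin (γ ρ) + Real.cos (γ ρ) ^ 2 *
        (Real.cos (γ ρ) * (1 + c₁ * c₂) * δ ρ + (c₁ + c₂) * Real.sin (γ ρ))) /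
          (v * Real.cos (γ ρ))) ρ) :
    HasDerivAt (fun r => Real.tan (γ r))
      (k * ((1 + c₁ * c₂) * δ ρ + (c₁ + c₂) * Real.tan (γ ρ))) ρ :=
  ((Real.hasDerivAt_tan hc).comp ρ hγ).congr_deriv (one_div_cos_sq_mul_closedLoop_eq hc hv)

theorem HasDerivAt.sq_add_sq_backstepping {x y : ℝ → ℝ} {ρ k c₁ c₂ : ℝ}
    (hx : HasDerivAt x (-k * y ρ) ρ)
    (hy : HasDerivAt y (k * ((1 + c₁ * c₂) * x ρ + (c₁ + c₂) * y ρ)) ρ) :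
    HasDerivAt (fun r => x r ^ 2 + (y r + c₁ * x r) ^ 2)
      (2 * k * (c₁ * x ρ ^ 2 + c₂ * (y ρ + c₁ * x ρ) ^ 2)) ρ := by
  have hζ : HasDerivAt (fun r => y r + c₁ * x r) (k * (x ρ + c₂ * (y ρ + c₁ * x ρ))) ρ :=
    (hy.add (hx.const_mul c₁)).congr_deriv (by ring)
  exact ((hx.pow 2).add (hζ.pow 2)).congr_deriv (by push_cast; ring)

theorem stmt8_general (v ρ₀ c₁ c₂ : ℝ) (hv : 0 < v)
    (δ γ : ℝ → ℝ)
    (ω : ℝ → ℝ)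
    (hω : ∀ ρ ∈ Ioc 0 ρ₀, ω ρ = v / ρ *
      (Real.sin (γ ρ) + Real.cos (γ ρ) ^ 2 *
        (Real.cos (γ ρ) * (1 + c₁ * c₂) * δ ρ + (c₁ + c₂) * Real.sin (γ ρ))))
    (hcos : ∀ ρ ∈ Ioc 0 ρ₀, Real.cos (γ ρ) ≠ 0)
    (hδ : ∀ ρ ∈ Ioc 0 ρ₀, HasDerivAt δ (-(1 / ρ) * Real.tan (γ ρ)) ρ)
    (hγ : ∀ ρ ∈ Ioc 0 ρ₀,
      HasDerivAt γ (-(1 / ρ) * Real.tan (γ ρ) + ω ρ / (v * Real.cos (γ ρ))) ρ) :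
    ∀ ρ ∈ Ioc 0 ρ₀,
      HasDerivAt (fun r => δ r ^ 2 + (Real.tan (γ r) + c₁ * δ r) ^ 2)
        ((2 / ρ) * (c₁ * δ ρ ^ 2 + c₂ * (Real.tan (γ ρ) + c₁ * δ ρ) ^ 2)) ρ := by
  intro ρ hρ
  have hγ' := hγ ρ hρ
  rw [hω ρ hρ, div_eq_mul_one_div v ρ] at hγ'
  have htan := hγ'.tan_comp_of_closedLoop (hcos ρ hρ) hv.ne'
  exact ((hδ ρ hρ).sq_add_sq_backstepping htan).congr_deriv (by ring)

theorem stmt8 (v ρ₀ c₁ c₂ : ℝ) (hv : 0 < v) (hρ₀ : 0 < ρ₀)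
    (δ γ : ℝ → ℝ)
    (ω : ℝ → ℝ)
    (hω : ∀ ρ ∈ Ioc 0 ρ₀, ω ρ = v / ρ *
      (Real.sin (γ ρ) + Real.cos (γ ρ) ^ 2 *
        (Real.cos (γ ρ) * (1 + c₁ * c₂) * δ ρ + (c₁ + c₂) * Real.sin (γ ρ))))
    (hcos : ∀ ρ ∈ Ioc 0 ρ₀, Real.cos (γ ρ) ≠ 0)
    (hδ : ∀ ρ ∈ Ioc 0 ρ₀, HasDerivAt δ (-(1 / ρ) * Real.tan (γ ρ)) ρ)
    (hγ : ∀ ρ ∈ Ioc 0 ρ₀,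
      HasDerivAt γ (-(1 / ρ) * Real.tan (γ ρ) + ω ρ / (v * Real.cos (γ ρ))) ρ) :
    ∀ ρ ∈ Ioc 0 ρ₀,
      HasDerivAt (fun r => δ r ^ 2 + (Real.tan (γ r) + c₁ * δ r) ^ 2)
        ((2 / ρ) * (c₁ * δ ρ ^ 2 + c₂ * (Real.tan (γ ρ) + c₁ * δ ρ) ^ 2)) ρ :=
  stmt8_general v ρ₀ c₁ c₂ hv δ γ ω hω hcos hδ hγ
end

section
/- Consider the scalar ODE ρ'(t) = −c₀·ρ(t)^{n/(n+1)}·cos γ(t) with c₀ > 0, n ∈ ℕ, ρ(0) = ρ₀ > 0, and suppose cos γ(t) ≥ 1/√(1 + C²) for all t in the interval of existence, for some constant C ≥ 0. Then with t₁ = (n+1)·(ρ₀^{1/(n+1)}/c₀)·√(1 + C²), we have ρ(t) ≤ ρ₀·(1 − t/t₁)^{n+1} for all t in the interval of existence intersected with [0, t₁). -/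
/-!
Substituting `u = ρ ^ (1/(n+1))` linearises the differential inequality
`ρ' ≤ -(c₀/√(1+C²)) ρ ^ (n/(n+1))` into `u' ≤ -c₀ / ((n+1)√(1+C²))`, so `u` lies below the line
through `u 0 = ρ₀ ^ (1/(n+1))` that vanishes at `t₁`; raising to the power `n+1` gives the bound.
-/

open Set Real

theorem Convex.image_sub_le_mul_sub_of_hasDerivAt_le {D : Set ℝ} (hD : Convex ℝ D)
    {f f' : ℝ → ℝ} {C : ℝ} (hf : ∀ x ∈ D, HasDerivAt f (f' x) x) (hf' : ∀ x ∈ D, f' x ≤ C)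
    {x y : ℝ} (hx : x ∈ D) (hy : y ∈ D) (hxy : x ≤ y) : f y - f x ≤ C * (y - x) := by
  have hint : ∀ z ∈ interior D, HasDerivAt f (f' z) z := fun z hz => hf z (interior_subset hz)
  refine hD.image_sub_le_mul_sub_of_deriv_le
    (fun z hz => (hf z hz).continuousAt.continuousWithinAt)
    (fun z hz => (hint z hz).differentiableAt.differentiableWithinAt) (fun z hz => ?_)
    x hx y hy hxy
  rw [(hint z hz).deriv]
  exact hf' z (interior_subset hz)

theorem rpow_le_sub_mul_of_hasDerivAt_le_neg_mul_rpow {ρ ρ' : ℝ → ℝ} {c p T : ℝ} (hp : 0 ≤ p)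
    (hpos : ∀ t ∈ Ico 0 T, 0 < ρ t) (hderiv : ∀ t ∈ Ico 0 T, HasDerivAt ρ (ρ' t) t)
    (hle : ∀ t ∈ Ico 0 T, ρ' t ≤ -c * ρ t ^ (1 - p)) {t : ℝ} (ht : t ∈ Ico 0 T) :
    ρ t ^ p ≤ ρ 0 ^ p - c * p * t := by
  have hderiv_pow : ∀ s ∈ Ico 0 T,
      HasDerivAt (fun s => ρ s ^ p) (ρ' s * p * ρ s ^ (p - 1)) s := fun s hs =>
    (hderiv s hs).rpow_const (Or.inl (hpos s hs).ne')
  have hle_pow : ∀ s ∈ Ico 0 T, ρ' s * p * ρ s ^ (p - 1) ≤ -(c * p) := fun s hs => by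
    have hρ := hpos s hs
    have hcancel : ρ s ^ (1 - p) * ρ s ^ (p - 1) = 1 := by
      rw [← rpow_add hρ, show 1 - p + (p - 1) = 0 by ring, rpow_zero]
    calc ρ' s * p * ρ s ^ (p - 1)
        ≤ -c * ρ s ^ (1 - p) * p * ρ s ^ (p - 1) := by
          have := (rpow_pos_of_pos hρ (p - 1)).le
          gcongr
          exact hle s hs
      _ = -(c * p) := by linear_combination (-c * p) * hcancel
  have h0 : (0 : ℝ) ∈ Ico 0 T := ⟨le_rfl, ht.1.trans_lt ht.2⟩
  have := (convex_Ico 0 T).image_sub_le_mul_sub_of_hasDerivAt_le hderiv_pow hle_pow h0 ht ht.1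
  linarith

theorem rpow_one_div_succ_pow {x : ℝ} (hx : 0 ≤ x) (n : ℕ) :
    (x ^ (1 / ((n : ℝ) + 1))) ^ (n + 1) = x := by
  simpa [one_div] using rpow_inv_natCast_pow hx n.succ_ne_zero

theorem stmt15_general (c₀ ρ₀ C T : ℝ) (n : ℕ) (hc₀ : 0 < c₀) (hρ₀ : 0 < ρ₀)
    (ρ γ : ℝ → ℝ)
    (hρpos : ∀ t ∈ Ico 0 T, 0 < ρ t)
    (hρ0 : ρ 0 = ρ₀)
    (hode : ∀ t ∈ Ico 0 T,
      HasDerivAt ρ (-c₀ * ρ t ^ ((n : ℝ) / (n + 1)) * Real.cos (γ t)) t)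
    (hcos : ∀ t ∈ Ico 0 T, 1 / Real.sqrt (1 + C ^ 2) ≤ Real.cos (γ t)) :
    ∀ t ∈ Ico 0 T,
      t < (n + 1) * (ρ₀ ^ ((1 : ℝ) / (n + 1)) / c₀) * Real.sqrt (1 + C ^ 2) →
      ρ t ≤ ρ₀ * (1 - t / ((n + 1) * (ρ₀ ^ ((1 : ℝ) / (n + 1)) / c₀) *
        Real.sqrt (1 + C ^ 2))) ^ (n + 1) := by
  intro t ht _
  set A := √(1 + C ^ 2)
  have hA : 0 < A := sqrt_pos.mpr (by positivity)
  set B := ρ₀ ^ ((1 : ℝ) / (n + 1))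
  have hB : 0 < B := rpow_pos_of_pos hρ₀ _
  have hexp : (n : ℝ) / (n + 1) = 1 - 1 / (n + 1) := by field_simp; ring
  have hle : ∀ s ∈ Ico 0 T, -c₀ * ρ s ^ ((n : ℝ) / (n + 1)) * cos (γ s) ≤
      -(c₀ / A) * ρ s ^ (1 - 1 / ((n : ℝ) + 1)) := fun s hs => by
    rw [← hexp]
    have hρn := rpow_pos_of_pos (hρpos s hs) ((n : ℝ) / (n + 1))
    linear_combination mul_le_mul_of_nonneg_left (hcos s hs) (mul_pos hc₀ hρn).le
  have hroot := rpow_le_sub_mul_of_hasDerivAt_le_neg_mul_rpow (by positivity) hρpos hode hle ht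
  rw [hρ0, show B - c₀ / A * (1 / ((n : ℝ) + 1)) * t = B * (1 - t / ((n + 1) * (B / c₀) * A))
    by field_simp] at hroot
  calc ρ t = (ρ t ^ (1 / ((n : ℝ) + 1))) ^ (n + 1) :=
        (rpow_one_div_succ_pow (hρpos t ht).le n).symm
    _ ≤ (B * (1 - t / ((n + 1) * (B / c₀) * A))) ^ (n + 1) :=
        pow_le_pow_left₀ (rpow_nonneg (hρpos t ht).le _) hroot _
    _ = ρ₀ * (1 - t / ((n + 1) * (B / c₀) * A)) ^ (n + 1) := by
        rw [mul_pow, rpow_one_div_succ_pow hρ₀.le]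

theorem stmt15 (c₀ ρ₀ C T : ℝ) (n : ℕ) (hc₀ : 0 < c₀) (hρ₀ : 0 < ρ₀) (hC : 0 ≤ C)
    (hT : 0 < T)
    (ρ γ : ℝ → ℝ)
    (hρpos : ∀ t ∈ Ico 0 T, 0 < ρ t)
    (hρ0 : ρ 0 = ρ₀)
    (hode : ∀ t ∈ Ico 0 T,
      HasDerivAt ρ (-c₀ * ρ t ^ ((n : ℝ) / (n + 1)) * Real.cos (γ t)) t)
    (hcos : ∀ t ∈ Ico 0 T, 1 / Real.sqrt (1 + C ^ 2) ≤ Real.cos (γ t)) :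
    ∀ t ∈ Ico 0 T,
      t < (n + 1) * (ρ₀ ^ ((1 : ℝ) / (n + 1)) / c₀) * Real.sqrt (1 + C ^ 2) →
      ρ t ≤ ρ₀ * (1 - t / ((n + 1) * (ρ₀ ^ ((1 : ℝ) / (n + 1)) / c₀) *
        Real.sqrt (1 + C ^ 2))) ^ (n + 1) :=
  stmt15_general c₀ ρ₀ C T n hc₀ hρ₀ ρ γ hρpos hρ0 hode hcos
end
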